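/- Let β ≥ 1, let C be a finite set with |C| = m ≥ 2, let μ be a Borel probability measure on the cube [0,1]^C (a utility vector u = (u_j)_{j∈C}), and let W, B ∈ C be two distinct elements. Suppose (i) ∑_{j ∈ C \ {W}} ∫ σ_β(u_W − u_j) dμ ≥ ∑_{j ∈ C \ {B}} ∫ σ_β(u_B − u_j) dμ, and (ii) ∑_{j ∈ C \ {W}} ∫ σ_β(u_W − u_j) dμ ≥ (m − 1)/2. Then ∫ u_B dμ ≤ β · (1 + exp(−β))/(1 − exp(−β)) · ∫ u_W dμ. -/

import Mathlib

/-! For utilities in `[0, 1]` and every candidate `j` (including `W` and `B`),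
`2 σ_β(u_W - u_j) - σ_β(u_B - u_j) ≤ 1/2 + (β/2) u_W - (σ_β(1) - 1/2) u_B`:
the first term is controlled by the Lipschitz constant `β/4` of `σ_β`, the second by the
concavity of the sigmoid on `[0, ∞)`. Summing expectations over all `m` candidates, where the
diagonal terms contribute `σ_β(0) = 1/2`, hypotheses (i) and (ii) bound the left side below by
`m/2`, so the expected right side is at least `1/2`. Since
`σ_β(1) - 1/2 = (1 - e^{-β}) / (2 (1 + e^{-β}))`, this is the claimed bound. -/

open MeasureTheory

noncomputable def sigma (β t : ℝ) : ℝ := 1 / (1 + Real.exp (-(β * t)))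

namespace Real

lemma lipschitzWith_sigmoid : LipschitzWith 4⁻¹ sigmoid := by
  refine lipschitzWith_of_nnnorm_deriv_le differentiable_sigmoid fun x => ?_
  rw [deriv_sigmoid, ← NNReal.coe_le_coe, coe_nnnorm, norm_eq_abs, abs_le]
  push_cast
  constructor <;> nlinarith [sigmoid_pos x, sigmoid_lt_one x, sq_nonneg (sigmoid x - 1 / 2)]

lemma half_le_sigmoid {x : ℝ} (hx : 0 ≤ x) : 1 / 2 ≤ sigmoid x := by
  simpa [sigmoid_zero] using sigmoid_le hx

lemma concaveOn_sigmoid : ConcaveOn ℝ (Set.Ici 0) sigmoid := by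
  refine AntitoneOn.concaveOn_of_deriv (convex_Ici 0) continuous_sigmoid.continuousOn
    differentiable_sigmoid.differentiableOn ?_
  rw [interior_Ici, deriv_sigmoid]
  intro x hx y _ hxy
  have hxy' := sigmoid_le hxy
  have hx' := half_le_sigmoid (le_of_lt hx)
  dsimp only
  nlinarith

end Real

lemma sigma_eq_sigmoid (β t : ℝ) : sigma β t = Real.sigmoid (β * t) := by
  rw [sigma, Real.sigmoid_def, one_div]

lemma sigma_zero (β : ℝ) : sigma β 0 = 1 / 2 := by
  rw [sigma_eq_sigmoid, mul_zero, Real.sigmoid_zero, one_div]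

lemma sigma_neg (β t : ℝ) : sigma β (-t) = 1 - sigma β t := by
  rw [sigma_eq_sigmoid, sigma_eq_sigmoid, mul_neg, Real.sigmoid_neg]

lemma sigma_mono {β : ℝ} (hβ : 0 ≤ β) {t s : ℝ} (hts : t ≤ s) : sigma β t ≤ sigma β s := by
  rw [sigma_eq_sigmoid, sigma_eq_sigmoid]
  exact Real.sigmoid_le (mul_le_mul_of_nonneg_left hts hβ)

lemma sigma_add_le {β : ℝ} (hβ : 0 ≤ β) (t : ℝ) {d : ℝ} (hd : 0 ≤ d) :
    sigma β (t + d) ≤ sigma β t + β / 4 * d := by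
  have h := Real.lipschitzWith_sigmoid.dist_le_mul (β * (t + d)) (β * t)
  rw [Real.dist_eq, Real.dist_eq, ← mul_sub, add_sub_cancel_left, abs_mul, abs_of_nonneg hβ,
    abs_of_nonneg hd] at h
  rw [sigma_eq_sigmoid, sigma_eq_sigmoid]
  have := le_abs_self (Real.sigmoid (β * (t + d)) - Real.sigmoid (β * t))
  push_cast at h
  linarith

lemma sigma_chord {β : ℝ} (hβ : 0 ≤ β) {t : ℝ} (ht : t ∈ Set.Icc (0 : ℝ) 1) :
    1 / 2 + (sigma β 1 - 1 / 2) * t ≤ sigma β t := by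
  have h := Real.concaveOn_sigmoid.2 (Set.mem_Ici.2 hβ) (Set.mem_Ici.2 le_rfl) ht.1
    (sub_nonneg.2 ht.2) (add_sub_cancel t 1)
  simp only [smul_eq_mul, mul_zero, add_zero, Real.sigmoid_zero] at h
  rw [sigma_eq_sigmoid, sigma_eq_sigmoid, mul_one, mul_comm β t]
  linarith

lemma sigma_one_sub_half (β : ℝ) :
    sigma β 1 - 1 / 2 = (1 - Real.exp (-β)) / (2 * (1 + Real.exp (-β))) := by
  have : 1 + Real.exp (-β) ≠ 0 := by positivity
  rw [sigma, mul_one]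
  field_simp
  ring

lemma three_halves_add_le_sigma_add_two_sigma {β : ℝ} (hβ : 0 ≤ β) {y s : ℝ}
    (hy : y ∈ Set.Icc (0 : ℝ) 1) (hs : s ∈ Set.Icc (0 : ℝ) 1) :
    3 / 2 + (sigma β 1 - 1 / 2) * y ≤ sigma β (y - s) + 2 * sigma β s := by
  have hchord_s := sigma_chord hβ hs
  rcases le_or_gt y s with hys | hsy
  · have hgap : 0 ≤ sigma β 1 - 1 / 2 := by
      linarith [sigma_mono hβ zero_le_one, sigma_zero β]
    have hflip : sigma β (y - s) = 1 - sigma β (s - y) := by rw [← sigma_neg, neg_sub]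
    have hmono := sigma_mono hβ (sub_le_self s hy.1)
    have := mul_le_mul_of_nonneg_left hys hgap
    linarith
  · have hchord_ys := sigma_chord hβ ⟨sub_nonneg.2 hsy.le, by linarith [hy.2, hs.1]⟩
    have hhalf := sigma_mono hβ hs.1
    rw [sigma_zero] at hhalf
    linarith

lemma two_sigma_sub_sigma_le {β : ℝ} (hβ : 0 ≤ β) {x y s : ℝ} (hx : 0 ≤ x)
    (hy : y ∈ Set.Icc (0 : ℝ) 1) (hs : s ∈ Set.Icc (0 : ℝ) 1) :
    2 * sigma β (x - s) - sigma β (y - s) ≤ 1 / 2 + β / 2 * x - (sigma β 1 - 1 / 2) * y := by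
  have hlip := sigma_add_le hβ (-s) hx
  rw [neg_add_eq_sub, sigma_neg] at hlip
  linarith [three_halves_add_le_sigma_add_two_sigma hβ hy hs]

lemma le_mul_of_sigma_gap_mul_le {β : ℝ} (hβ : 0 < β) {a b : ℝ}
    (h : (sigma β 1 - 1 / 2) * b ≤ β / 2 * a) :
    b ≤ β * ((1 + Real.exp (-β)) / (1 - Real.exp (-β))) * a := by
  have hE : Real.exp (-β) < 1 := Real.exp_lt_one_iff.2 (neg_neg_of_pos hβ)
  have hE' : 0 < 1 + Real.exp (-β) := by positivity
  rw [sigma_one_sub_half, div_mul_eq_mul_div, div_le_iff₀ (by positivity)] at h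
  rw [mul_div_assoc', div_mul_eq_mul_div, le_div_iff₀ (by linarith)]
  nlinarith

section Integrals

variable {C : Type*} {μ : Measure (C → ℝ)}

lemma integrable_sigma_sub [IsFiniteMeasure μ] (β : ℝ) (i j : C) :
    Integrable (fun u => sigma β (u i - u j)) μ := by
  simp_rw [sigma_eq_sigmoid]
  refine Integrable.of_bound (continuous_sigmoid.measurable.comp
    (by fun_prop : Measurable fun u : C → ℝ => β * (u i - u j))).aestronglyMeasurable 1
    (Filter.Eventually.of_forall fun u => ?_)
  rw [Real.norm_of_nonneg (Real.sigmoid_nonneg _)]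
  exact Real.sigmoid_le_one _

lemma integrable_eval_of_ae_mem_Icc [IsFiniteMeasure μ]
    (hsupp : ∀ᵐ u ∂μ, ∀ j, u j ∈ Set.Icc (0 : ℝ) 1) (i : C) :
    Integrable (fun u => u i) μ := by
  refine Integrable.of_bound (measurable_pi_apply i).aestronglyMeasurable 1 ?_
  filter_upwards [hsupp] with u hu
  rw [Real.norm_of_nonneg (hu i).1]
  exact (hu i).2

lemma integral_two_sigma_sub_sigma_le [IsProbabilityMeasure μ] {β : ℝ} (hβ : 0 ≤ β)
    (hsupp : ∀ᵐ u ∂μ, ∀ j, u j ∈ Set.Icc (0 : ℝ) 1) (W B j : C) :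
    2 * (∫ u, sigma β (u W - u j) ∂μ) - ∫ u, sigma β (u B - u j) ∂μ
      ≤ 1 / 2 + β / 2 * (∫ u, u W ∂μ) - (sigma β 1 - 1 / 2) * ∫ u, u B ∂μ := by
  have hW := (integrable_eval_of_ae_mem_Icc (μ := μ) hsupp W).const_mul (β / 2)
  have hB := (integrable_eval_of_ae_mem_Icc (μ := μ) hsupp B).const_mul (sigma β 1 - 1 / 2)
  have hσ := (integrable_sigma_sub (μ := μ) β W j).const_mul 2
  have hA : Integrable (fun u => 1 / 2 + β / 2 * u W) μ := (integrable_const _).add hW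
  calc 2 * (∫ u, sigma β (u W - u j) ∂μ) - ∫ u, sigma β (u B - u j) ∂μ
      = ∫ u, (2 * sigma β (u W - u j) - sigma β (u B - u j)) ∂μ := by
        rw [integral_sub hσ (integrable_sigma_sub β B j), integral_const_mul]
    _ ≤ ∫ u, (1 / 2 + β / 2 * u W - (sigma β 1 - 1 / 2) * u B) ∂μ := by
        refine integral_mono_ae (hσ.sub (integrable_sigma_sub β B j)) (hA.sub hB) ?_
        filter_upwards [hsupp] with u hu
        exact two_sigma_sub_sigma_le hβ (hu W).1 (hu B) (hu j)
    _ = _ := by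
        rw [integral_sub hA hB, integral_add (integrable_const _) hW,
          integral_const, integral_const_mul, integral_const_mul, probReal_univ, one_smul]

lemma sum_integral_sigma_eq [Fintype C] [DecidableEq C] [IsProbabilityMeasure μ] (β : ℝ)
    (c : C) :
    ∑ j, ∫ u, sigma β (u c - u j) ∂μ
      = ∑ j ∈ Finset.univ.erase c, (∫ u, sigma β (u c - u j) ∂μ) + 1 / 2 := by
  rw [← Finset.sum_erase_add _ _ (Finset.mem_univ c)]
  simp [sigma_zero]

end Integrals

theorem borda_upper_bound_general {C : Type*} [Fintype C] [DecidableEq C] (β : ℝ) (hβ : 1 ≤ β)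
    (m : ℕ) (hm : m = Fintype.card C)
    (μ : Measure (C → ℝ)) [IsProbabilityMeasure μ]
    (hsupp : ∀ᵐ u ∂μ, ∀ j, u j ∈ Set.Icc (0:ℝ) 1)
    (W B : C)
    (h1 : ∑ j ∈ Finset.univ.erase W, (∫ u, sigma β (u W - u j) ∂μ)
        ≥ ∑ j ∈ Finset.univ.erase B, (∫ u, sigma β (u B - u j) ∂μ))
    (h2 : ∑ j ∈ Finset.univ.erase W, (∫ u, sigma β (u W - u j) ∂μ)
        ≥ ((m : ℝ) - 1) / 2) :
    (∫ u, u B ∂μ) ≤ β * ((1 + Real.exp (-β)) / (1 - Real.exp (-β))) * (∫ u, u W ∂μ) := by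
  have hβ0 : 0 < β := zero_lt_one.trans_le hβ
  set R := 1 / 2 + β / 2 * (∫ u, u W ∂μ) - (sigma β 1 - 1 / 2) * ∫ u, u B ∂μ
    with hR_def
  have hm0 : (0 : ℝ) < m := by
    rw [hm, Nat.cast_pos]
    exact Fintype.card_pos_iff.2 ⟨W⟩
  have hlower : (m : ℝ) / 2 ≤
      ∑ j, (2 * (∫ u, sigma β (u W - u j) ∂μ) - ∫ u, sigma β (u B - u j) ∂μ) := by
    rw [Finset.sum_sub_distrib, ← Finset.mul_sum, sum_integral_sigma_eq, sum_integral_sigma_eq]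
    linarith
  have hupper :
      ∑ j, (2 * (∫ u, sigma β (u W - u j) ∂μ) - ∫ u, sigma β (u B - u j) ∂μ) ≤ m * R := by
    simpa [hm] using Finset.sum_le_card_nsmul Finset.univ _ R
      fun j _ => integral_two_sigma_sub_sigma_le hβ0.le hsupp W B j
  have hR : 1 / 2 ≤ R := le_of_mul_le_mul_left (by linarith) hm0
  exact le_mul_of_sigma_gap_mul_le hβ0 (by linarith [hR_def])

theorem borda_upper_bound {C : Type*} [Fintype C] [DecidableEq C] (β : ℝ) (hβ : 1 ≤ β)
    (m : ℕ) (hm : m = Fintype.card C) (hm2 : 2 ≤ m)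
    (μ : Measure (C → ℝ)) [IsProbabilityMeasure μ]
    (hsupp : ∀ᵐ u ∂μ, ∀ j, u j ∈ Set.Icc (0:ℝ) 1)
    (W B : C) (hWB : W ≠ B)
    (h1 : ∑ j ∈ Finset.univ.erase W, (∫ u, sigma β (u W - u j) ∂μ)
        ≥ ∑ j ∈ Finset.univ.erase B, (∫ u, sigma β (u B - u j) ∂μ))
    (h2 : ∑ j ∈ Finset.univ.erase W, (∫ u, sigma β (u W - u j) ∂μ)
        ≥ ((m : ℝ) - 1) / 2) :
    (∫ u, u B ∂μ) ≤ β * ((1 + Real.exp (-β)) / (1 - Real.exp (-β))) * (∫ u, u W ∂μ) :=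
  borda_upper_bound_general β hβ m hm μ hsupp W B h1 h2
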